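/- arXiv:2204.06590 — 2 statements merged into one kernel-verified Lean document; each statement's English description precedes it below -/
import Mathlib

section
/- Decay improvement iteration lemma: Let r₀ > 0 and let h : [0, r₀] → ℝ be a nonnegative nondecreasing function such that h(t) ≤ a[(t/ρ)ⁿ + ε] h(ρ) + a ρ^β holds whenever 0 ≤ t ≤ ρ ≤ r₀, where a > 0, ε ≥ 0, n > 0 and 0 < β < n are fixed. Then for every b with 0 < b < n there exists ε₀ = ε₀(a, n, β, b) > 0 such that, if ε ≤ ε₀, then h(t) ≤ c (t/ρ)^{b} h(ρ) + c t^β holds whenever 0 < t ≤ ρ ≤ r₀, for some constant c = c(a, n, β, b). -/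
open Set

set_option maxHeartbeats 1600000 in
/-- **Decay improvement iteration lemma.** Let `a > 0`, `n > 0`, `0 < β < n` and
`0 < b < n`. There exist `ε₀ = ε₀(a,n,β,b) > 0` and `c = c(a,n,β,b) > 0` such that:
whenever `r₀ > 0`, `0 ≤ ε ≤ ε₀`, and `h : [0,r₀] → ℝ` is nonnegative and nondecreasing
with `h t ≤ a ((t/ρ)ⁿ + ε) h ρ + a ρ^β` for all `0 ≤ t ≤ ρ ≤ r₀`, then
`h t ≤ c (t/ρ)^b h ρ + c t^β` for all `0 < t ≤ ρ ≤ r₀`. -/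
theorem decay_improvement_iteration
    (a n β b : ℝ) (ha : 0 < a) (hn : 0 < n) (hβ : 0 < β) (hβn : β < n)
    (hb : 0 < b) (hbn : b < n) :
    ∃ ε₀ : ℝ, 0 < ε₀ ∧ ∃ c : ℝ, 0 < c ∧
      ∀ r₀ : ℝ, 0 < r₀ →
      ∀ ε : ℝ, 0 ≤ ε → ε ≤ ε₀ →
      ∀ h : ℝ → ℝ,
        (∀ t ∈ Set.Icc 0 r₀, 0 ≤ h t) →
        (∀ t₁ t₂ : ℝ, 0 ≤ t₁ → t₁ ≤ t₂ → t₂ ≤ r₀ → h t₁ ≤ h t₂) →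
        (∀ t ρ : ℝ, 0 ≤ t → t ≤ ρ → ρ ≤ r₀ →
          h t ≤ a * ((t / ρ) ^ n + ε) * h ρ + a * ρ ^ β) →
        ∀ t ρ : ℝ, 0 < t → t ≤ ρ → ρ ≤ r₀ →
          h t ≤ c * (t / ρ) ^ b * h ρ + c * t ^ β := by
  classical
  set γ : ℝ := (max b β + n) / 2 with hγdef
  have hγb : b < γ := by
    have h1 : b ≤ max b β := le_max_left _ _
    have h2 : max b β < n := max_lt hbn hβn
    simp only [hγdef]; linarith
  have hγβ : β < γ := by
    have h1 : β ≤ max b β := le_max_right _ _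
    have h2 : max b β < n := max_lt hbn hβn
    simp only [hγdef]; linarith
  have hγn : γ < n := by
    have h2 : max b β < n := max_lt hbn hβn
    simp only [hγdef]; linarith
  have hγpos : 0 < γ := lt_trans hb hγb
  set δ : ℝ := n - γ with hδdef
  have hδpos : 0 < δ := by simp only [hδdef]; linarith
  have h2a : (0:ℝ) < (2*a)⁻¹ := by positivity
  set τ : ℝ := min 2⁻¹ ((2*a)⁻¹ ^ δ⁻¹) with hτdef
  have hτpos : 0 < τ := lt_min (by norm_num) (Real.rpow_pos_of_pos h2a _)
  have hτlt1 : τ < 1 := lt_of_le_of_lt (min_le_left _ _) (by norm_num)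
  have hτle1 : τ ≤ 1 := hτlt1.le
  have hτn : 2 * a * τ ^ n ≤ τ ^ γ := by
    have hτδ : τ ^ δ ≤ (2*a)⁻¹ := by
      calc τ ^ δ ≤ ((2*a)⁻¹ ^ δ⁻¹) ^ δ :=
            Real.rpow_le_rpow hτpos.le (min_le_right _ _) hδpos.le
        _ = (2*a)⁻¹ := Real.rpow_inv_rpow h2a.le (ne_of_gt hδpos)
    have hn' : n = γ + δ := by simp only [hδdef]; ring
    rw [hn', Real.rpow_add hτpos]
    have hg : (0:ℝ) ≤ τ ^ γ := Real.rpow_nonneg hτpos.le _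
    calc 2 * a * (τ ^ γ * τ ^ δ) ≤ 2 * a * (τ ^ γ * (2*a)⁻¹) := by
          apply mul_le_mul_of_nonneg_left
            (mul_le_mul_of_nonneg_left hτδ hg) (by positivity)
      _ = τ ^ γ * (2 * a * (2*a)⁻¹) := by ring
      _ = τ ^ γ := by
          rw [mul_inv_cancel₀ (by positivity : (2*a) ≠ 0), mul_one]
  have hτβγ : τ ^ γ < τ ^ β := Real.rpow_lt_rpow_of_exponent_gt hτpos hτlt1 hγβ
  set M : ℝ := a / (τ ^ β - τ ^ γ) with hMdef
  have hMpos : 0 < M := div_pos ha (by linarith)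
  have hMkey : τ ^ γ * M + a = M * τ ^ β := by
    have hne : τ ^ β - τ ^ γ ≠ 0 := by linarith
    have h1 : M * (τ ^ β - τ ^ γ) = a := div_mul_cancel₀ a hne
    linear_combination -h1
  refine ⟨τ ^ n, Real.rpow_pos_of_pos hτpos n,
    τ ^ (-b) + M * τ ^ (-β), by positivity, ?_⟩
  intro r₀ hr₀ ε hε0 hεε₀ h hpos hmono hdecay
  -- one-step decay estimate
  have key : ∀ s : ℝ, 0 < s → s ≤ r₀ → h (τ * s) ≤ τ ^ γ * h s + a * s ^ β := by
    intro s hs hsr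
    have h1 : h (τ * s) ≤ a * ((τ * s / s) ^ n + ε) * h s + a * s ^ β :=
      hdecay (τ * s) s (by positivity) (mul_le_of_le_one_left hs.le hτle1) hsr
    have h2 : τ * s / s = τ := by field_simp
    rw [h2] at h1
    have h3 : a * (τ ^ n + ε) ≤ τ ^ γ := by nlinarith [mul_le_mul_of_nonneg_left hεε₀ ha.le]
    have hhs : 0 ≤ h s := hpos s ⟨hs.le, hsr⟩
    have h4 := mul_le_mul_of_nonneg_right h3 hhs
    linarith
  -- iteration claim
  have claim : ∀ k : ℕ, ∀ ρ : ℝ, 0 < ρ → ρ ≤ r₀ →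
      h (τ ^ k * ρ) ≤ ((τ:ℝ) ^ k) ^ γ * h ρ + M * (τ ^ k * ρ) ^ β := by
    intro k
    induction k with
    | zero =>
        intro ρ hρ hρr
        simp only [pow_zero, one_mul, Real.one_rpow]
        have hpos' : 0 ≤ M * ρ ^ β := by positivity
        linarith
    | succ k ih =>
        intro ρ hρ hρr
        have hτk : (0:ℝ) < τ ^ k := pow_pos hτpos k
        have hs : 0 < τ ^ k * ρ := by positivity
        have hle1 : (τ:ℝ) ^ k ≤ 1 := pow_le_one₀ hτpos.le hτle1
        have hsr : τ ^ k * ρ ≤ r₀ := le_trans (mul_le_of_le_one_left hρ.le hle1) hρr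
        have e1 : (τ : ℝ) ^ (k+1) * ρ = τ * (τ ^ k * ρ) := by ring
        have h1 : h (τ * (τ ^ k * ρ)) ≤ τ ^ γ * h (τ ^ k * ρ) + a * (τ ^ k * ρ) ^ β :=
          key _ hs hsr
        have h2 := ih ρ hρ hρr
        have e2 : ((τ:ℝ) ^ (k+1)) ^ γ = τ ^ γ * ((τ:ℝ) ^ k) ^ γ := by
          rw [pow_succ, Real.mul_rpow hτk.le hτpos.le]; ring
        have e3 : (τ * (τ ^ k * ρ)) ^ β = τ ^ β * (τ ^ k * ρ) ^ β :=
          Real.mul_rpow hτpos.le hs.le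
        rw [e1, e2, e3]
        have hτγ : (0:ℝ) < τ ^ γ := Real.rpow_pos_of_pos hτpos γ
        have hβnn : (0:ℝ) ≤ (τ ^ k * ρ) ^ β := Real.rpow_nonneg hs.le β
        have h5 := mul_le_mul_of_nonneg_left h2 hτγ.le
        calc h (τ * (τ ^ k * ρ)) ≤ τ ^ γ * h (τ ^ k * ρ) + a * (τ ^ k * ρ) ^ β := h1
          _ ≤ τ ^ γ * (((τ:ℝ) ^ k) ^ γ * h ρ + M * (τ ^ k * ρ) ^ β)
                + a * (τ ^ k * ρ) ^ β := by linarith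
          _ = τ ^ γ * ((τ:ℝ) ^ k) ^ γ * h ρ + (τ ^ γ * M + a) * (τ ^ k * ρ) ^ β := by
              ring
          _ = τ ^ γ * ((τ:ℝ) ^ k) ^ γ * h ρ + M * (τ ^ β * (τ ^ k * ρ) ^ β) := by
              rw [hMkey]; ring
  -- conclusion
  intro t ρ ht htρ hρr₀
  have hρpos : 0 < ρ := lt_of_lt_of_le ht htρ
  have hexP : ∃ k : ℕ, τ ^ (k+1) * ρ < t := by
    obtain ⟨m, hm⟩ := exists_pow_lt_of_lt_one (div_pos ht hρpos) hτlt1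
    refine ⟨m, ?_⟩
    have hτm : (0:ℝ) < τ ^ m := pow_pos hτpos m
    have h1 : τ ^ (m+1) < t / ρ := by
      calc (τ:ℝ) ^ (m+1) = τ ^ m * τ := pow_succ τ m
        _ < τ ^ m * 1 := mul_lt_mul_of_pos_left hτlt1 hτm
        _ = τ ^ m := mul_one _
        _ < t / ρ := hm
    calc τ ^ (m+1) * ρ < (t/ρ) * ρ := mul_lt_mul_of_pos_right h1 hρpos
      _ = t := by field_simp
  set k := Nat.find hexP with hkdef
  have hk1 : τ ^ (k+1) * ρ < t := Nat.find_spec hexP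
  have hk2 : t ≤ τ ^ k * ρ := by
    rcases Nat.eq_zero_or_pos k with hk0 | hk0
    · rw [hk0]; simpa using htρ
    · obtain ⟨j, hj⟩ := Nat.exists_eq_add_of_lt hk0
      have hmin := Nat.find_min hexP (m := j) (by omega)
      push_neg at hmin
      have : (j : ℕ) + 1 = k := by omega
      rw [← this]
      exact hmin
  have hτk0 : (0:ℝ) < τ ^ k := pow_pos hτpos k
  have hle1 : (τ:ℝ) ^ k ≤ 1 := pow_le_one₀ hτpos.le hτle1
  have hτkρr : τ ^ k * ρ ≤ r₀ := le_trans (mul_le_of_le_one_left hρpos.le hle1) hρr₀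
  have hmt : h t ≤ h (τ ^ k * ρ) := hmono t (τ ^ k * ρ) ht.le hk2 hτkρr
  have hcl := claim k ρ hρpos hρr₀
  have hhρ : 0 ≤ h ρ := hpos ρ ⟨hρpos.le, hρr₀⟩
  -- bound the homogeneous factor
  have hbd1 : ((τ:ℝ) ^ k) ^ γ ≤ τ ^ (-b) * (t/ρ) ^ b := by
    have e1 : ((τ:ℝ) ^ k) ^ γ ≤ ((τ:ℝ) ^ k) ^ b :=
      Real.rpow_le_rpow_of_exponent_ge hτk0 hle1 hγb.le
    have e2 : (τ:ℝ) ^ k ≤ t / (τ * ρ) := by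
      rw [le_div_iff₀ (by positivity)]
      have : (τ:ℝ) ^ (k+1) * ρ = τ ^ k * (τ * ρ) := by ring
      linarith [hk1, this.symm.le, this.le]
    have e3 : ((τ:ℝ) ^ k) ^ b ≤ (t/(τ*ρ)) ^ b := Real.rpow_le_rpow hτk0.le e2 hb.le
    have e4 : (t/(τ*ρ)) ^ b = τ ^ (-b) * (t/ρ) ^ b := by
      rw [Real.rpow_neg hτpos.le, show t/(τ*ρ) = τ⁻¹ * (t/ρ) by field_simp,
        Real.mul_rpow (by positivity) (by positivity), Real.inv_rpow hτpos.le]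
    calc ((τ:ℝ) ^ k) ^ γ ≤ ((τ:ℝ) ^ k) ^ b := e1
      _ ≤ (t/(τ*ρ)) ^ b := e3
      _ = τ ^ (-b) * (t/ρ) ^ b := e4
  -- bound the inhomogeneous factor
  have hbd2 : (τ ^ k * ρ) ^ β ≤ τ ^ (-β) * t ^ β := by
    have e2 : τ ^ k * ρ ≤ t / τ := by
      rw [le_div_iff₀ hτpos]
      have : (τ:ℝ) ^ (k+1) * ρ = τ ^ k * ρ * τ := by ring
      linarith [hk1, this.le]
    have e3 : (τ ^ k * ρ) ^ β ≤ (t/τ) ^ β :=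
      Real.rpow_le_rpow (by positivity) e2 hβ.le
    have e4 : (t/τ) ^ β = τ ^ (-β) * t ^ β := by
      rw [Real.rpow_neg hτpos.le, show t/τ = τ⁻¹ * t by ring,
        Real.mul_rpow (by positivity) ht.le, Real.inv_rpow hτpos.le]
    linarith [e3, e4.le, e4.ge]
  -- assemble
  have hfac1 : ((τ:ℝ) ^ k) ^ γ * h ρ ≤ τ ^ (-b) * (t/ρ) ^ b * h ρ :=
    mul_le_mul_of_nonneg_right hbd1 hhρ
  have hfac2 : M * (τ ^ k * ρ) ^ β ≤ M * (τ ^ (-β) * t ^ β) :=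
    mul_le_mul_of_nonneg_left hbd2 hMpos.le
  have htβ : (0:ℝ) ≤ t ^ β := Real.rpow_nonneg ht.le β
  have htb : (0:ℝ) ≤ (t/ρ) ^ b := Real.rpow_nonneg (by positivity) b
  have hnb : (0:ℝ) ≤ τ ^ (-b) := Real.rpow_nonneg hτpos.le _
  have hnβ : (0:ℝ) ≤ τ ^ (-β) := Real.rpow_nonneg hτpos.le _
  have hextra1 : 0 ≤ M * τ ^ (-β) * ((t/ρ) ^ b * h ρ) := by positivity
  have hextra2 : 0 ≤ τ ^ (-b) * t ^ β := by positivity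
  calc h t ≤ h (τ ^ k * ρ) := hmt
    _ ≤ ((τ:ℝ) ^ k) ^ γ * h ρ + M * (τ ^ k * ρ) ^ β := hcl
    _ ≤ τ ^ (-b) * (t/ρ) ^ b * h ρ + M * (τ ^ (-β) * t ^ β) := by linarith
    _ ≤ (τ ^ (-b) + M * τ ^ (-β)) * (t/ρ) ^ b * h ρ
          + (τ ^ (-b) + M * τ ^ (-β)) * t ^ β := by nlinarith
end

section
/- Tail bound via Hölder continuity: Let n ≥ 1 be an integer, γ > 1, s ∈ (0,1), β ∈ (s, 1), x₀ ∈ ℝⁿ, d ∈ (0, 1], and 0 < t ≤ d/4. There is a constant c = c(n, s, γ, β) > 0 such that for every measurable w : ℝⁿ → ℝ satisfying |w(x)| ≤ M for all x ∈ ℝⁿ and |w(x) − w(y)| ≤ H |x − y|^β for all x, y ∈ B_d(x₀) (with constants M, H ≥ 0), one has ∫_{ℝⁿ∖B_t(x₀)} |w(y) − (w)_{B_t(x₀)}|^γ |y − x₀|^{−n−sγ} dy ≤ c ( M^γ d^{−sγ} + H^γ d^{(β−s)γ} + H^γ t^{(β−s)γ} ). -/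
/-!
Split `ℝⁿ ∖ B_t(x₀)` into the annulus `B_d(x₀) ∖ B_t(x₀)` and the exterior of `B_d(x₀)`.
On the annulus every point of `B_t(x₀)` lies within `2|y - x₀|` of `y`, so Hölder continuity gives
`|w(y) - (w)_{B_t(x₀)}| ≤ H (2|y - x₀|)^β`; outside `B_d(x₀)` simply `|w(y) - (w)_{B_t(x₀)}| ≤ 2M`.
In polar coordinates, with `p = (β - s)γ > 0` and `ω_n = |B_1|`,
`∫_{B_d ∖ B_t} |y - x₀|^(p - n) dy = n ω_n (d^p - t^p) / p` and
`∫_{ℝⁿ ∖ B_d} |y - x₀|^(-n - sγ) dy = n ω_n d^(-sγ) / (sγ)`,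
so `c = n ω_n (2^(βγ) / p + 2^γ / (sγ))` works.
-/

open MeasureTheory Metric Set

/-- Average `(w)_{B_r(x₀)}` of `w` over the ball `B_r(x₀)`. -/
noncomputable def ballAvg {n : ℕ} (w : EuclideanSpace ℝ (Fin n) → ℝ)
    (x₀ : EuclideanSpace ℝ (Fin n)) (r : ℝ) : ℝ :=
  ⨍ x in ball x₀ r, w x

theorem smul_indicator_eq_indicator_mul {S : Set ℝ} (f : ℝ → ℝ) (k : ℕ) :
    (fun r : ℝ => r ^ k • S.indicator f r) = S.indicator (fun r => r ^ k * f r) := by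
  ext r; rw [smul_eq_mul, indicator_mul_right]

theorem pow_pred_mul_rpow_sub_natCast {r : ℝ} (hr : 0 < r) {k : ℕ} (hk : 1 ≤ k) (q : ℝ) :
    r ^ (k - 1) * r ^ (q - k) = r ^ (q - 1) := by
  rw [← Real.rpow_natCast, ← Real.rpow_add hr, Nat.cast_sub hk]
  ring_nf

section Shells

variable {E : Type*} [NormedAddCommGroup E] (x₀ : E) {S : Set ℝ} {t d : ℝ}

theorem indicator_comp_norm_sub (f : ℝ → ℝ) :
    {y | ‖y - x₀‖ ∈ S}.indicator (fun y => f ‖y - x₀‖) = fun y => S.indicator f ‖y - x₀‖ := by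
  ext y; by_cases h : ‖y - x₀‖ ∈ S <;> simp [h]

theorem measurableSet_setOf_norm_sub_mem [MeasurableSpace E] [OpensMeasurableSpace E]
    (hS : MeasurableSet S) : MeasurableSet {y | ‖y - x₀‖ ∈ S} :=
  (by fun_prop : Continuous fun y : E => ‖y - x₀‖).measurable hS

theorem ball_sdiff_ball_eq_setOf_norm_sub_mem_Ico :
    ball x₀ d \ ball x₀ t = {y | ‖y - x₀‖ ∈ Ico t d} := by
  ext y; simp [dist_eq_norm, and_comm]

theorem compl_ball_eq_setOf_norm_sub_mem_Ici : (ball x₀ d)ᶜ = {y | ‖y - x₀‖ ∈ Ici d} := by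
  ext y; simp [dist_eq_norm]

theorem compl_ball_eq_annulus_union_compl_ball (htd : t ≤ d) :
    (ball x₀ t)ᶜ = (ball x₀ d \ ball x₀ t) ∪ (ball x₀ d)ᶜ := by
  ext y
  have := ball_subset_ball htd (x := x₀)
  simp only [mem_compl_iff, mem_union, mem_sdiff]
  tauto

end Shells

section Radial

variable {E : Type*} [NormedAddCommGroup E] [NormedSpace ℝ E] [FiniteDimensional ℝ E]
  [MeasurableSpace E] [BorelSpace E] [Nontrivial E] (μ : Measure E) [μ.IsAddHaarMeasure]
  (x₀ : E) {S : Set ℝ} {t d : ℝ}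

local notation "dim" => Module.finrank ℝ E

theorem setIntegral_setOf_norm_sub_mem (f : ℝ → ℝ) (hS : MeasurableSet S) (hS0 : S ⊆ Ioi 0) :
    ∫ y in {y | ‖y - x₀‖ ∈ S}, f ‖y - x₀‖ ∂μ =
      dim * μ.real (ball 0 1) * ∫ r in S, r ^ (dim - 1) * f r := by
  rw [← integral_indicator (measurableSet_setOf_norm_sub_mem x₀ hS), indicator_comp_norm_sub,
    integral_sub_right_eq_self (fun y => S.indicator f ‖y‖) x₀, integral_fun_norm_addHaar,
    nsmul_eq_mul, smul_eq_mul, ← mul_assoc, smul_indicator_eq_indicator_mul,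
    setIntegral_indicator hS, inter_eq_self_of_subset_right hS0]

theorem integrableOn_setOf_norm_sub_mem_iff (f : ℝ → ℝ) (hS : MeasurableSet S)
    (hS0 : S ⊆ Ioi 0) :
    IntegrableOn (fun y => f ‖y - x₀‖) {y | ‖y - x₀‖ ∈ S} μ ↔
      IntegrableOn (fun r => r ^ (dim - 1) * f r) S := by
  have htranslate : Integrable (fun y => S.indicator f ‖y - x₀‖) μ ↔
      Integrable (fun y => S.indicator f ‖y‖) μ :=
    ⟨fun h => by simpa using h.comp_sub_right (-x₀), fun h => h.comp_sub_right x₀⟩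
  rw [← integrable_indicator_iff (measurableSet_setOf_norm_sub_mem x₀ hS),
    indicator_comp_norm_sub, htranslate, integrable_fun_norm_addHaar,
    smul_indicator_eq_indicator_mul, IntegrableOn, integrable_indicator_iff hS, IntegrableOn,
    Measure.restrict_restrict hS, inter_eq_self_of_subset_left hS0]
  rfl

theorem integrableOn_annulus_norm_sub_rpow (ht : 0 < t) (q : ℝ) :
    IntegrableOn (fun y => ‖y - x₀‖ ^ q) (ball x₀ d \ ball x₀ t) μ := by
  rw [ball_sdiff_ball_eq_setOf_norm_sub_mem_Ico, integrableOn_setOf_norm_sub_mem_iff μ x₀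
    (fun r => r ^ q) measurableSet_Ico fun r hr => ht.trans_le hr.1]
  refine (ContinuousOn.integrableOn_Icc ?_).mono_set Ico_subset_Icc_self
  exact (continuousOn_pow _).mul
    (continuousOn_id.rpow_const fun r hr => Or.inl (ht.trans_le hr.1).ne')

theorem setIntegral_annulus_norm_sub_rpow (ht : 0 < t) (htd : t ≤ d) {p : ℝ} (hp : 0 < p) :
    ∫ y in ball x₀ d \ ball x₀ t, ‖y - x₀‖ ^ (p - dim) ∂μ =
      dim * μ.real (ball 0 1) * ((d ^ p - t ^ p) / p) := by
  rw [ball_sdiff_ball_eq_setOf_norm_sub_mem_Ico, setIntegral_setOf_norm_sub_mem μ x₀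
      (fun r => r ^ (p - dim)) measurableSet_Ico fun r hr => ht.trans_le hr.1,
    setIntegral_congr_fun measurableSet_Ico fun r hr =>
      pow_pred_mul_rpow_sub_natCast (ht.trans_le hr.1) Module.finrank_pos p,
    integral_Ico_eq_integral_Ioo, ← integral_Ioc_eq_integral_Ioo,
    ← intervalIntegral.integral_of_le htd, integral_rpow (Or.inl (by linarith)), sub_add_cancel]

theorem integrableOn_compl_ball_norm_sub_rpow (hd : 0 < d) {σ : ℝ} (hσ : 0 < σ) :
    IntegrableOn (fun y => ‖y - x₀‖ ^ (-σ - dim)) (ball x₀ d)ᶜ μ := by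
  rw [compl_ball_eq_setOf_norm_sub_mem_Ici, integrableOn_setOf_norm_sub_mem_iff μ x₀
    (fun r => r ^ (-σ - dim)) measurableSet_Ici fun r hr => hd.trans_le hr]
  have hrpow : IntegrableOn (fun r : ℝ => r ^ (-σ - 1)) (Ici d) := by
    rw [integrableOn_Ici_iff_integrableOn_Ioi]
    exact integrableOn_Ioi_rpow_of_lt (by linarith) hd
  refine hrpow.congr_fun (fun r hr => ?_) measurableSet_Ici
  exact (pow_pred_mul_rpow_sub_natCast (hd.trans_le hr) Module.finrank_pos (-σ)).symm

theorem setIntegral_compl_ball_norm_sub_rpow (hd : 0 < d) {σ : ℝ} (hσ : 0 < σ) :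
    ∫ y in (ball x₀ d)ᶜ, ‖y - x₀‖ ^ (-σ - dim) ∂μ = dim * μ.real (ball 0 1) * (d ^ (-σ) / σ) := by
  rw [compl_ball_eq_setOf_norm_sub_mem_Ici, setIntegral_setOf_norm_sub_mem μ x₀
      (fun r => r ^ (-σ - dim)) measurableSet_Ici fun r hr => hd.trans_le hr,
    setIntegral_congr_fun measurableSet_Ici fun r hr =>
      pow_pred_mul_rpow_sub_natCast (hd.trans_le hr) Module.finrank_pos (-σ),
    integral_Ici_eq_integral_Ioi, integral_Ioi_rpow_of_lt (by linarith) hd, sub_add_cancel,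
    neg_div, div_neg, neg_neg]

theorem setIntegral_compl_ball_le_of_le_rpow {F : E → ℝ} (hF : AEStronglyMeasurable F μ)
    (hF0 : ∀ y, 0 ≤ F y) {p σ K₁ K₂ : ℝ} (ht : 0 < t) (htd : t ≤ d) (hp : 0 < p) (hσ : 0 < σ)
    (hann : ∀ y ∈ ball x₀ d \ ball x₀ t, F y ≤ K₁ * ‖y - x₀‖ ^ (p - dim))
    (htail : ∀ y ∈ (ball x₀ d)ᶜ, F y ≤ K₂ * ‖y - x₀‖ ^ (-σ - dim)) :
    ∫ y in (ball x₀ t)ᶜ, F y ∂μ ≤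
      dim * μ.real (ball 0 1) * (K₁ * ((d ^ p - t ^ p) / p) + K₂ * (d ^ (-σ) / σ)) := by
  have hmeas_ann : MeasurableSet (ball x₀ d \ ball x₀ t) :=
    measurableSet_ball.diff measurableSet_ball
  have hann_int : IntegrableOn (fun y => K₁ * ‖y - x₀‖ ^ (p - dim)) (ball x₀ d \ ball x₀ t) μ :=
    (integrableOn_annulus_norm_sub_rpow μ x₀ ht _).const_mul K₁
  have htail_int : IntegrableOn (fun y => K₂ * ‖y - x₀‖ ^ (-σ - dim)) (ball x₀ d)ᶜ μ :=
    (integrableOn_compl_ball_norm_sub_rpow μ x₀ (ht.trans_le htd) hσ).const_mul K₂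
  have hF_ann : IntegrableOn F (ball x₀ d \ ball x₀ t) μ :=
    hann_int.mono' hF.restrict (ae_restrict_of_forall_mem hmeas_ann fun y hy => by
      simpa only [Real.norm_of_nonneg (hF0 y)] using hann y hy)
  have hF_tail : IntegrableOn F (ball x₀ d)ᶜ μ :=
    htail_int.mono' hF.restrict (ae_restrict_of_forall_mem measurableSet_ball.compl fun y hy => by
      simpa only [Real.norm_of_nonneg (hF0 y)] using htail y hy)
  calc ∫ y in (ball x₀ t)ᶜ, F y ∂μ
      = ∫ y in ball x₀ d \ ball x₀ t, F y ∂μ + ∫ y in (ball x₀ d)ᶜ, F y ∂μ := by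
        rw [compl_ball_eq_annulus_union_compl_ball x₀ htd,
          setIntegral_union (disjoint_compl_right.mono_left sdiff_subset)
            measurableSet_ball.compl hF_ann hF_tail]
    _ ≤ ∫ y in ball x₀ d \ ball x₀ t, K₁ * ‖y - x₀‖ ^ (p - dim) ∂μ
          + ∫ y in (ball x₀ d)ᶜ, K₂ * ‖y - x₀‖ ^ (-σ - dim) ∂μ :=
        add_le_add (setIntegral_mono_on hF_ann hann_int hmeas_ann hann)
          (setIntegral_mono_on hF_tail htail_int measurableSet_ball.compl htail)
    _ = _ := by
        rw [integral_const_mul, integral_const_mul,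
          setIntegral_annulus_norm_sub_rpow μ x₀ ht htd hp,
          setIntegral_compl_ball_norm_sub_rpow μ x₀ (ht.trans_le htd) hσ]
        ring

end Radial

theorem rpow_div_rpow_le_of_le_mul_two_mul_rpow {a H r β γ α : ℝ} (ha : 0 ≤ a) (hH : 0 ≤ H)
    (hr : 0 < r) (hγ : 0 ≤ γ) (h : a ≤ H * (2 * r) ^ β) :
    a ^ γ / r ^ α ≤ 2 ^ (β * γ) * H ^ γ * r ^ (β * γ - α) := by
  calc a ^ γ / r ^ α ≤ (H * (2 * r) ^ β) ^ γ / r ^ α := by gcongr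
    _ = 2 ^ (β * γ) * H ^ γ * r ^ (β * γ - α) := by
      rw [Real.mul_rpow hH (by positivity), ← Real.rpow_mul (by positivity),
        Real.mul_rpow zero_le_two hr.le, Real.rpow_sub hr]
      ring

theorem rpow_div_rpow_le_of_le_two_mul {a M r γ α : ℝ} (ha : 0 ≤ a) (hM : 0 ≤ M) (hr : 0 ≤ r)
    (hγ : 0 ≤ γ) (h : a ≤ 2 * M) : a ^ γ / r ^ α ≤ 2 ^ γ * M ^ γ * r ^ (-α) := by
  calc a ^ γ / r ^ α ≤ (2 * M) ^ γ / r ^ α := by gcongr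
    _ = 2 ^ γ * M ^ γ * r ^ (-α) := by
      rw [Real.mul_rpow zero_le_two hM, Real.rpow_neg hr, div_eq_mul_inv]

section BallAverage

variable {n : ℕ} {w : EuclideanSpace ℝ (Fin n) → ℝ} {x₀ y : EuclideanSpace ℝ (Fin n)} {t : ℝ}

theorem abs_ballAvg_sub_le (ht : 0 < t) (hw : IntegrableOn w (ball x₀ t)) {c C : ℝ}
    (h : ∀ x ∈ ball x₀ t, |w x - c| ≤ C) : |ballAvg w x₀ t - c| ≤ C := by
  have := (convex_closedBall c C).set_average_mem isClosed_closedBall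
    (measure_ball_pos volume x₀ ht).ne' measure_ball_lt_top.ne
    (ae_restrict_of_forall_mem measurableSet_ball fun x hx => by
      simpa only [mem_closedBall, Real.dist_eq] using h x hx) hw
  simpa only [ballAvg, mem_closedBall, Real.dist_eq] using this

theorem abs_sub_ballAvg_le_two_mul (ht : 0 < t) (hw : IntegrableOn w (ball x₀ t)) {M : ℝ}
    (hM : ∀ x, |w x| ≤ M) : |w y - ballAvg w x₀ t| ≤ 2 * M := by
  have hAvg : |ballAvg w x₀ t - 0| ≤ M := abs_ballAvg_sub_le ht hw fun x _ => by simpa using hM x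
  rw [sub_zero] at hAvg
  linarith [abs_sub (w y) (ballAvg w x₀ t), hM y]

theorem abs_sub_ballAvg_le_of_holder {d H β : ℝ} (ht : 0 < t) (htd : t ≤ d)
    (hw : IntegrableOn w (ball x₀ t)) (hH : 0 ≤ H) (hβ : 0 ≤ β)
    (hholder : ∀ x ∈ ball x₀ d, ∀ y ∈ ball x₀ d, |w x - w y| ≤ H * ‖x - y‖ ^ β)
    (hy : y ∈ ball x₀ d \ ball x₀ t) : |w y - ballAvg w x₀ t| ≤ H * (2 * ‖y - x₀‖) ^ β := by
  rw [abs_sub_comm]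
  refine abs_ballAvg_sub_le ht hw fun x hx => (hholder x (ball_subset_ball htd hx) y hy.1).trans ?_
  have hty : t ≤ ‖y - x₀‖ := by simpa [dist_eq_norm] using hy.2
  have hxy : ‖x - y‖ ≤ 2 * ‖y - x₀‖ := by
    rw [mem_ball, dist_eq_norm] at hx
    linarith [norm_sub_le_norm_sub_add_norm_sub x x₀ y, norm_sub_rev x₀ y]
  gcongr

end BallAverage

/-- **Tail bound via Hölder continuity.** For `n ≥ 1`, `γ > 1`, `s ∈ (0,1)`,
`β ∈ (s,1)` there is `c = c(n,s,γ,β) > 0` such that for all `x₀ ∈ ℝⁿ`, `d ∈ (0,1]`,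
`0 < t ≤ d/4`, `M, H ≥ 0`, and every measurable `w : ℝⁿ → ℝ` with `|w| ≤ M` on `ℝⁿ`
and `|w(x)-w(y)| ≤ H|x-y|^β` on `B_d(x₀)`,
`∫_{ℝⁿ∖B_t(x₀)} |w(y)-(w)_{B_t(x₀)}|^γ |y-x₀|^{-n-sγ} dy
  ≤ c (M^γ d^{-sγ} + H^γ d^{(β-s)γ} + H^γ t^{(β-s)γ})`. -/
theorem tail_bound_via_holder
    (n : ℕ) (hn : 1 ≤ n) (γ s β : ℝ) (hγ : 1 < γ)
    (hs : s ∈ Set.Ioo (0 : ℝ) 1) (hβ : β ∈ Set.Ioo s 1) :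
    ∃ c : ℝ, 0 < c ∧
      ∀ (x₀ : EuclideanSpace ℝ (Fin n)) (d t M H : ℝ),
        0 < d → d ≤ 1 → 0 < t → t ≤ d / 4 → 0 ≤ M → 0 ≤ H →
        ∀ w : EuclideanSpace ℝ (Fin n) → ℝ, Measurable w →
          (∀ x, |w x| ≤ M) →
          (∀ x ∈ ball x₀ d, ∀ y ∈ ball x₀ d, |w x - w y| ≤ H * ‖x - y‖ ^ β) →
          ∫ y in (ball x₀ t)ᶜ,
              |w y - ballAvg w x₀ t| ^ γ / ‖y - x₀‖ ^ ((n : ℝ) + s * γ) ≤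
            c * (M ^ γ * d ^ (-(s * γ)) + H ^ γ * d ^ ((β - s) * γ)
              + H ^ γ * t ^ ((β - s) * γ)) := by
  have hp : 0 < (β - s) * γ := mul_pos (sub_pos.2 hβ.1) (by linarith)
  have hσ : 0 < s * γ := mul_pos hs.1 (by linarith)
  have : NeZero n := ⟨by omega⟩
  have hV : 0 < volume.real (ball (0 : EuclideanSpace ℝ (Fin n)) 1) :=
    ENNReal.toReal_pos (measure_ball_pos volume 0 one_pos).ne' measure_ball_lt_top.ne
  refine ⟨n * volume.real (ball (0 : EuclideanSpace ℝ (Fin n)) 1) *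
    (2 ^ (β * γ) / ((β - s) * γ) + 2 ^ γ / (s * γ)), by positivity, ?_⟩
  intro x₀ d t M H hd _ ht htd hM hH w hw hwM hwH
  have hwt : IntegrableOn w (ball x₀ t) :=
    Measure.integrableOn_of_bounded measure_ball_lt_top.ne hw.aestronglyMeasurable
      (ae_of_all _ hwM)
  have hsplit := setIntegral_compl_ball_le_of_le_rpow volume x₀
    (F := fun y => |w y - ballAvg w x₀ t| ^ γ / ‖y - x₀‖ ^ ((n : ℝ) + s * γ))
    (by fun_prop : Measurable _).aestronglyMeasurable (fun y => by positivity) ht (d := d)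
    (by linarith) hp hσ (K₁ := 2 ^ (β * γ) * H ^ γ) (K₂ := 2 ^ γ * M ^ γ) ?_ ?_
  · rw [finrank_euclideanSpace_fin] at hsplit
    refine hsplit.trans (sub_nonneg.1 ?_)
    set p := (β - s) * γ
    set σ := s * γ
    ring_nf
    positivity
  · intro y hy
    have hr : 0 < ‖y - x₀‖ := ht.trans_le (by simpa [dist_eq_norm] using hy.2)
    rw [finrank_euclideanSpace_fin, show (β - s) * γ - n = β * γ - (n + s * γ) by ring]
    exact rpow_div_rpow_le_of_le_mul_two_mul_rpow (abs_nonneg _) hH hr (by linarith)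
      (abs_sub_ballAvg_le_of_holder ht (by linarith) hwt hH (hs.1.trans hβ.1).le hwH hy)
  · intro y _
    rw [finrank_euclideanSpace_fin, show -(s * γ) - n = -(n + s * γ) by ring]
    exact rpow_div_rpow_le_of_le_two_mul (abs_nonneg _) hM (norm_nonneg _) (by linarith)
      (abs_sub_ballAvg_le_two_mul ht hwt hwM)
end
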